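/- Let n ≥ 1, S ⊆ Fin n with t ∈ S, and α real. Then D_t(α) · H_t · GCZ_S · H_t = C · P_S(α), where C = (∏_{unordered pairs {i,j} ⊆ S∖{t}, i≠j} CZ_{ij}) · (∏_{i ∈ S∖{t}} CNOT_{i,t}). (Equation (7): the phase gadget P_S(α) can be synthesized up to a 'garbage' Clifford C using a single global CZ gate, a Hadamard pair on one qubit, and one single-qubit Z-phase gate.) -/

import Mathlib

open Matrix

noncomputable section

/-- `2^n × 2^n` matrices, indexed by computational basis states `x : Fin n → Bool`. -/
abbrev NQMatrix (n : ℕ) := Matrix (Fin n → Bool) (Fin n → Bool) ℂ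

/-- A bit counted as 0 or 1. -/
def bitv (b : Bool) : ℕ := if b then 1 else 0

/-- A bit as an index into a 2×2 matrix. -/
def bIdx (b : Bool) : Fin 2 := if b then 1 else 0

/-- The n-fold Kronecker product of 2×2 matrices. -/
def kron {n : ℕ} (f : Fin n → Matrix (Fin 2) (Fin 2) ℂ) : NQMatrix n :=
  Matrix.of fun x y => ∏ i, f i (bIdx (x i)) (bIdx (y i))

def PX : Matrix (Fin 2) (Fin 2) ℂ := !![0, 1; 1, 0]
def PY : Matrix (Fin 2) (Fin 2) ℂ := !![0, -Complex.I; Complex.I, 0]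
def PZ : Matrix (Fin 2) (Fin 2) ℂ := !![1, 0; 0, -1]

/-- The Hadamard matrix. -/
def HMat : Matrix (Fin 2) (Fin 2) ℂ := ((Real.sqrt 2)⁻¹ : ℝ) • !![1, 1; 1, -1]

/-- The 2×2 matrix `A` applied at position `i`, identity elsewhere. -/
def gate1 {n : ℕ} (A : Matrix (Fin 2) (Fin 2) ℂ) (i : Fin n) : NQMatrix n :=
  kron (fun j => if j = i then A else 1)

lemma diag_comm {m : Type*} [Fintype m] [DecidableEq m] (d e : m → ℂ) :
    Commute (Matrix.diagonal d) (Matrix.diagonal e) := by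
  unfold Commute SemiconjBy
  rw [Matrix.diagonal_mul_diagonal, Matrix.diagonal_mul_diagonal]
  exact congrArg Matrix.diagonal (funext fun i => mul_comm (d i) (e i))

/-- The two-qubit ZZ interaction gate `ZZ_{ij}(α)`. -/
def ZZgate {n : ℕ} (i j : Fin n) (α : ℝ) : NQMatrix n :=
  Matrix.diagonal fun x =>
    Complex.exp (-Complex.I * (α / 2) * (-1 : ℂ) ^ (bitv (x i) + bitv (x j)))

/-- The global ZZ gate on a subset `S`: the product of `ZZgate i j α` over all
unordered pairs `{i,j} ⊆ S` with `i ≠ j`. -/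
def GZZ {n : ℕ} (S : Finset (Fin n)) (α : ℝ) : NQMatrix n :=
  ((S ×ˢ S).filter fun p => p.1 < p.2).noncommProd (fun p => ZZgate p.1 p.2 α)
    (fun _ _ _ _ _ => diag_comm _ _)

/-- The two-qubit CZ gate. -/
def CZgate {n : ℕ} (i j : Fin n) : NQMatrix n :=
  Matrix.diagonal fun x => (-1 : ℂ) ^ (bitv (x i) * bitv (x j))

/-- The global CZ gate on a subset `S`: the product of `CZgate i j` over all
unordered pairs `{i,j} ⊆ S` with `i ≠ j`. -/
def GCZ {n : ℕ} (S : Finset (Fin n)) : NQMatrix n :=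
  ((S ×ˢ S).filter fun p => p.1 < p.2).noncommProd (fun p => CZgate p.1 p.2)
    (fun _ _ _ _ _ => diag_comm _ _)

/-- Flip the bits at positions in `S`. -/
def flipS {n : ℕ} (S : Finset (Fin n)) (x : Fin n → Bool) : Fin n → Bool :=
  fun i => if i ∈ S then !(x i) else x i

/-- The layer of NOT gates on the qubits in `S`, as a permutation matrix. -/
def XS {n : ℕ} (S : Finset (Fin n)) : NQMatrix n :=
  Matrix.of fun x y => if y = flipS S x then 1 else 0

/-- The CNOT gate with control `c` and target `t`, as a permutation matrix. -/
def CNOT {n : ℕ} (c t : Fin n) : NQMatrix n :=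
  Matrix.of fun x y => if y = Function.update x t (xor (x t) (x c)) then 1 else 0

/-- The targeted global Mølmer–Sørensen gate on the subset `S`:
`GMS_S(α) = exp(-i·(α/4)·Σ_{i ≠ j ∈ S} X_i·X_j)`, the sum ranging over ordered
pairs of distinct elements of `S`. -/
def GMS {n : ℕ} (S : Finset (Fin n)) (α : ℝ) : NQMatrix n :=
  NormedSpace.exp ((-Complex.I * (α / 4)) •
    ∑ p ∈ (S ×ˢ S).filter (fun p => p.1 ≠ p.2), gate1 PX p.1 * gate1 PX p.2)

/-- The single-qubit Z-phase gate `D_t(α)` on qubit `t`. -/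
def Dgate {n : ℕ} (t : Fin n) (α : ℝ) : NQMatrix n :=
  Matrix.diagonal fun x => Complex.exp (-Complex.I * (α / 2) * (-1 : ℂ) ^ (bitv (x t)))

/-- The phase gadget `P_S(α)` on the subset `S`. -/
def PhaseGadget {n : ℕ} (S : Finset (Fin n)) (α : ℝ) : NQMatrix n :=
  Matrix.diagonal fun x =>
    Complex.exp (-Complex.I * (α / 2) * (-1 : ℂ) ^ (∑ i ∈ S, bitv (x i)))

/-- The fan-in gate: the product of the (pairwise commuting) gates `CNOT_{i,t}`
over all `i ∈ S \ {t}`. -/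
def fanIn {n : ℕ} (S : Finset (Fin n)) (t : Fin n) : NQMatrix n :=
  (((S.erase t).sort (· ≤ ·)).map fun c => CNOT c t).prod

/-! The global CZ on `S` factors as the global CZ on `S \ {t}`, which does not touch qubit `t`
and so commutes with `H_t`, times the controlled-Z between qubit `t` and the parity of the
qubits in `S \ {t}`. Conjugating by `H_t` turns that controlled-Z into the controlled-X on `t`
driven by the same parity, which is the fan-in of CNOTs. This permutation sends `x` to a state
whose parity over `S` is `x_t`, so it intertwines `D_t(α)` with `P_S(α)`. -/

open Function

section Parity

variable {ι : Type*} [LinearOrder ι]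

lemma neg_one_pow_bitv_xor (a b : Bool) :
    (-1 : ℂ) ^ bitv (xor a b) = (-1) ^ bitv a * (-1) ^ bitv b := by
  cases a <;> cases b <;> norm_num [bitv]

lemma neg_one_pow_bitv_foldr_xor (L : List Bool) :
    (-1 : ℂ) ^ bitv (L.foldr xor false) = (-1) ^ (L.map bitv).sum := by
  induction L with
  | nil => rfl
  | cons a L ih =>
    rw [List.foldr_cons, List.map_cons, List.sum_cons, pow_add, neg_one_pow_bitv_xor, ih]

def parity (s : Finset ι) (x : ι → Bool) : Bool :=
  ((s.sort (· ≤ ·)).map x).foldr xor false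

lemma neg_one_pow_bitv_parity (s : Finset ι) (x : ι → Bool) :
    (-1 : ℂ) ^ bitv (parity s x) = (-1) ^ ∑ i ∈ s, bitv (x i) := by
  rw [parity, neg_one_pow_bitv_foldr_xor, List.map_map,
    ← List.sum_toFinset _ (s.sort_nodup _), Finset.sort_toFinset]
  rfl

lemma foldr_xor_map_update_of_notMem {L : List ι} {t : ι} (ht : t ∉ L) (x : ι → Bool)
    (b : Bool) : (L.map (update x t b)).foldr xor false = (L.map x).foldr xor false := by
  rw [List.map_congr_left fun i hi => update_of_ne (ne_of_mem_of_not_mem hi ht) b x]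

lemma parity_update_of_notMem {s : Finset ι} {t : ι} (ht : t ∉ s) (x : ι → Bool) (b : Bool) :
    parity s (update x t b) = parity s x :=
  foldr_xor_map_update_of_notMem (by rwa [Finset.mem_sort]) x b

end Parity

lemma prod_pairs_insert {ι M : Type*} [LinearOrder ι] [CommMonoid M] {s : Finset ι} {t : ι}
    (ht : t ∉ s) (f : ι → ι → M) (hf : ∀ i j, f i j = f j i) :
    ∏ p ∈ (insert t s ×ˢ insert t s).filter (fun p => p.1 < p.2), f p.1 p.2
      = (∏ p ∈ (s ×ˢ s).filter (fun p => p.1 < p.2), f p.1 p.2) * ∏ i ∈ s, f i t := by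
  simp only [Finset.prod_filter, Finset.prod_product, Finset.prod_insert ht, lt_irrefl,
    if_false, one_mul, Finset.prod_mul_distrib]
  rw [← mul_assoc, ← Finset.prod_mul_distrib, mul_comm]
  congr 1
  refine Finset.prod_congr rfl fun i hi => ?_
  rcases (ne_of_mem_of_not_mem hi ht).lt_or_gt with h | h
  · simp [h, h.not_gt]
  · simp [h, h.not_gt, hf]

lemma noncommProd_diagonal {ι m : Type*} [Fintype m] [DecidableEq m] (s : Finset ι)
    (d : ι → m → ℂ) :
    s.noncommProd (fun i => diagonal (d i)) (fun _ _ _ _ _ => diag_comm _ _)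
      = diagonal (fun x => ∏ i ∈ s, d i x) := by
  classical
  induction s using Finset.induction_on with
  | empty => exact diagonal_one.symm
  | insert a s ha ih =>
    refine (Finset.noncommProd_insert_of_notMem _ _ _ _ ha).trans ?_
    rw [ih, diagonal_mul_diagonal]
    simp only [Finset.prod_insert ha]

section Gates

variable {n : ℕ}

lemma one_apply_bIdx (a b : Bool) :
    (1 : Matrix (Fin 2) (Fin 2) ℂ) (bIdx a) (bIdx b) = if a = b then 1 else 0 := by
  cases a <;> cases b <;> simp [bIdx]

lemma gate1_apply (A : Matrix (Fin 2) (Fin 2) ℂ) (t : Fin n) (x y : Fin n → Bool) :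
    gate1 A t x y = if ∀ j ≠ t, x j = y j then A (bIdx (x t)) (bIdx (y t)) else 0 := by
  rw [gate1, kron, of_apply, ← Finset.prod_erase_mul _ _ (Finset.mem_univ t), if_pos rfl,
    Finset.prod_congr rfl fun j hj => by rw [if_neg (Finset.ne_of_mem_erase hj), one_apply_bIdx],
    Finset.prod_boole]
  simp only [Finset.mem_erase, Finset.mem_univ, and_true, ite_mul, one_mul, zero_mul]

lemma gate1_update_apply (A : Matrix (Fin 2) (Fin 2) ℂ) (t : Fin n) (x y : Fin n → Bool)
    (b : Bool) :
    gate1 A t (update x t b) y = if ∀ j ≠ t, x j = y j then A (bIdx b) (bIdx (y t)) else 0 := by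
  simp +contextual [gate1_apply]

lemma gate1_mul_apply (A : Matrix (Fin 2) (Fin 2) ℂ) (t : Fin n) (M : NQMatrix n)
    (x y : Fin n → Bool) :
    (gate1 A t * M) x y = ∑ b : Bool, A (bIdx (x t)) (bIdx b) * M (update x t b) y := by
  have hne : update x t true ≠ update x t false := fun h => by simpa using congrFun h t
  have hzero : ∀ z, z ≠ update x t true ∧ z ≠ update x t false → gate1 A t x z * M z y = 0 := by
    rintro z ⟨hz1, hz0⟩
    rw [gate1_apply, if_neg, zero_mul]
    intro h
    have hz : z = update x t (z t) := eq_update_iff.2 ⟨rfl, fun j hj => (h j hj).symm⟩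
    cases hb : z t <;> rw [hb] at hz
    exacts [hz0 hz, hz1 hz]
  rw [mul_apply, Fintype.sum_eq_add _ _ hne hzero, Fintype.sum_bool]
  simp +contextual [gate1_apply]

lemma commute_gate1_diagonal (A : Matrix (Fin 2) (Fin 2) ℂ) (t : Fin n)
    {d : (Fin n → Bool) → ℂ} (hd : ∀ x b, d (update x t b) = d x) :
    Commute (gate1 A t) (diagonal d) := by
  ext x y
  rw [mul_diagonal, diagonal_mul, gate1_apply]
  split_ifs with h
  · have hy : d y = d x := by
      rw [← hd x (y t), ← eq_update_iff.2 ⟨rfl, fun j hj => (h j hj).symm⟩]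
    rw [hy, mul_comm]
  · simp

def controlledFlip (t : Fin n) (p : (Fin n → Bool) → Bool) : NQMatrix n :=
  of fun x y => if y = update x t (xor (x t) (p x)) then 1 else 0

lemma controlledFlip_false (t : Fin n) : controlledFlip t (fun _ => false) = 1 := by
  ext x y
  simp [controlledFlip, one_apply, eq_comm]

lemma controlledFlip_mul_controlledFlip (t : Fin n) (p : (Fin n → Bool) → Bool)
    {q : (Fin n → Bool) → Bool} (hq : ∀ x b, q (update x t b) = q x) :
    controlledFlip t p * controlledFlip t q = controlledFlip t (fun x => xor (p x) (q x)) := by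
  ext x y
  simp only [controlledFlip, mul_apply, of_apply, ite_mul, one_mul, zero_mul,
    Finset.sum_ite_eq', Finset.mem_univ, if_true, hq, update_idem, update_self, Bool.xor_assoc]

lemma list_prod_map_CNOT {t : Fin n} {L : List (Fin n)} (ht : t ∉ L) :
    (L.map fun c => CNOT c t).prod = controlledFlip t (fun x => (L.map x).foldr xor false) := by
  induction L with
  | nil => exact (controlledFlip_false t).symm
  | cons c L ih =>
    rw [List.mem_cons, not_or] at ht
    rw [List.map_cons, List.prod_cons, ih ht.2]
    exact controlledFlip_mul_controlledFlip t (· c) (foldr_xor_map_update_of_notMem ht.2)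

lemma fanIn_eq_controlledFlip (S : Finset (Fin n)) (t : Fin n) :
    fanIn S t = controlledFlip t (parity (S.erase t)) :=
  list_prod_map_CNOT (by simp)

lemma sum_HMat_mul_neg_one_pow_mul_HMat (a c p : Bool) :
    ∑ b : Bool, HMat (bIdx a) (bIdx b) * ((-1) ^ (bitv b * bitv p) * HMat (bIdx b) (bIdx c))
      = if c = xor a p then 1 else 0 := by
  have hr : ((√2 : ℝ) : ℂ)⁻¹ ^ 2 = 1 / 2 := by
    rw [inv_pow, ← Complex.ofReal_pow, Real.sq_sqrt zero_le_two]; norm_num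
  cases a <;> cases c <;> cases p <;>
    simp [HMat, bIdx, bitv] <;> linear_combination 2 * hr

lemma gate1_HMat_mul_diagonal_mul_gate1_HMat (t : Fin n) {p : (Fin n → Bool) → Bool}
    (hp : ∀ x b, p (update x t b) = p x) :
    gate1 HMat t * diagonal (fun x => (-1 : ℂ) ^ (bitv (x t) * bitv (p x))) * gate1 HMat t
      = controlledFlip t p := by
  ext x y
  simp only [Matrix.mul_assoc, gate1_mul_apply, diagonal_mul, update_self, hp,
    gate1_update_apply, controlledFlip, of_apply, eq_update_iff]
  by_cases hxy : ∀ j ≠ t, x j = y j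
  · have hyx : ∀ j ≠ t, y j = x j := fun j hj => (hxy j hj).symm
    simp only [if_pos hxy, and_iff_left hyx]
    exact sum_HMat_mul_neg_one_pow_mul_HMat _ _ _
  · have hyx : ¬ ∀ j ≠ t, y j = x j := fun h => hxy fun j hj => (h j hj).symm
    simp [hxy, hyx]

lemma GCZ_eq_diagonal (S : Finset (Fin n)) :
    GCZ S = diagonal (fun x => ∏ p ∈ (S ×ˢ S).filter (fun p => p.1 < p.2),
      (-1 : ℂ) ^ (bitv (x p.1) * bitv (x p.2))) :=
  noncommProd_diagonal _ _

lemma GCZ_insert {s : Finset (Fin n)} {t : Fin n} (ht : t ∉ s) :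
    GCZ (insert t s)
      = GCZ s * diagonal (fun x => (-1 : ℂ) ^ (bitv (x t) * bitv (parity s x))) := by
  rw [GCZ_eq_diagonal, GCZ_eq_diagonal, diagonal_mul_diagonal]
  congr 1
  funext x
  rw [prod_pairs_insert ht (fun i j => (-1 : ℂ) ^ (bitv (x i) * bitv (x j)))
      fun i j => by rw [Nat.mul_comm], pow_mul', neg_one_pow_bitv_parity,
    ← Finset.prod_pow_eq_pow_sum, ← Finset.prod_pow]
  simp only [pow_mul]

lemma commute_gate1_GCZ (A : Matrix (Fin 2) (Fin 2) ℂ) {s : Finset (Fin n)} {t : Fin n}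
    (ht : t ∉ s) : Commute (gate1 A t) (GCZ s) := by
  rw [GCZ_eq_diagonal]
  refine commute_gate1_diagonal A t fun x b => Finset.prod_congr rfl fun p hp => ?_
  simp only [Finset.mem_filter, Finset.mem_product] at hp
  rw [update_of_ne (ne_of_mem_of_not_mem hp.1.1 ht), update_of_ne (ne_of_mem_of_not_mem hp.1.2 ht)]

lemma commute_Dgate_GCZ (t : Fin n) (α : ℝ) (s : Finset (Fin n)) :
    Commute (Dgate t α) (GCZ s) := by
  rw [GCZ_eq_diagonal]
  exact diag_comm _ _

lemma neg_one_pow_sum_bitv_update_parity {S : Finset (Fin n)} {t : Fin n} (ht : t ∈ S)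
    (x : Fin n → Bool) :
    (-1 : ℂ) ^ ∑ i ∈ S, bitv (update x t (xor (x t) (parity (S.erase t) x)) i)
      = (-1) ^ bitv (x t) := by
  rw [← Finset.add_sum_erase S _ ht, update_self,
    Finset.sum_congr rfl fun i hi => by rw [update_of_ne (Finset.ne_of_mem_erase hi)],
    pow_add, neg_one_pow_bitv_xor, neg_one_pow_bitv_parity, mul_assoc, ← pow_add,
    Even.neg_one_pow ⟨_, rfl⟩, mul_one]

lemma Dgate_mul_controlledFlip {S : Finset (Fin n)} {t : Fin n} (ht : t ∈ S) (α : ℝ) :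
    Dgate t α * controlledFlip t (parity (S.erase t))
      = controlledFlip t (parity (S.erase t)) * PhaseGadget S α := by
  ext x y
  simp only [Dgate, PhaseGadget, diagonal_mul, mul_diagonal, controlledFlip, of_apply]
  split_ifs with h
  · rw [h, neg_one_pow_sum_bitv_update_parity ht, mul_one, one_mul]
  · simp

end Gates

theorem phase_gadget_from_single_gcz_general (n : ℕ) (S : Finset (Fin n))
    (t : Fin n) (ht : t ∈ S) (α : ℝ) :
    Dgate t α * (gate1 HMat t * GCZ S * gate1 HMat t)
      = (GCZ (S.erase t) * fanIn S t) * PhaseGadget S α := by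
  have hnot : t ∉ S.erase t := S.notMem_erase t
  have hsplit : GCZ S = GCZ (S.erase t) *
      diagonal (fun x => (-1 : ℂ) ^ (bitv (x t) * bitv (parity (S.erase t) x))) := by
    rw [← GCZ_insert hnot, Finset.insert_erase ht]
  have hconj : gate1 HMat t * GCZ S * gate1 HMat t
      = GCZ (S.erase t) * controlledFlip t (parity (S.erase t)) := by
    rw [hsplit, ← mul_assoc, (commute_gate1_GCZ HMat hnot).eq, mul_assoc (GCZ _),
      mul_assoc (GCZ _), gate1_HMat_mul_diagonal_mul_gate1_HMat t (parity_update_of_notMem hnot)]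
  rw [hconj, ← mul_assoc, (commute_Dgate_GCZ t α _).eq, mul_assoc, Dgate_mul_controlledFlip ht,
    fanIn_eq_controlledFlip, mul_assoc]

/-- Equation (7): the phase gadget `P_S(α)` can be synthesized, up to a `garbage`
Clifford `C`, using a single global CZ gate, a Hadamard pair on one qubit `t ∈ S`,
and one single-qubit Z-phase gate. -/
theorem phase_gadget_from_single_gcz (n : ℕ) (hn : 1 ≤ n) (S : Finset (Fin n))
    (t : Fin n) (ht : t ∈ S) (α : ℝ) :
    Dgate t α * (gate1 HMat t * GCZ S * gate1 HMat t)
      = (GCZ (S.erase t) * fanIn S t) * PhaseGadget S α :=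
  phase_gadget_from_single_gcz_general n S t ht α
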